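/- Let n ≥ 2, let C be an n-dimensional cone of aperture ψ in ℝ^{n+1}, and let r : I → ℝ^{n+1}∖{0} be a non-colliding twice continuously differentiable curve on an open interval I. Then r is a geodesic on C if and only if there exists a 2-dimensional cone D of aperture ψ with D ⊆ C such that r is a geodesic on D. -/

import Mathlib

/-
Write a point of the cone over `a + U` as `x = ‖x‖ • a + u` with `u ∈ U`. On a geodesic the
acceleration pairs with `U` as `d(t) ⟪r(t), ·⟫`, so for each `y ∈ U` the function `⟪r(t), y⟫`
solves the linear equation `f'' = d f`. At a non-colliding time `t₀` the `U`-components of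
`r(t₀)` and `r'(t₀)` span a plane `V ≤ U`; every `y ∈ U ∩ Vᗮ` has zero initial data, hence
`⟪r, y⟫ ≡ 0` and `r` stays on the cone over `a + V`. Conversely, a 2-dimensional cone of the same
aperture inside `C` is the cone over `a + V` for some `V ≤ U`; the curve, and with it its
acceleration, lies in `ℝ a ⊕ V`, which is orthogonal to `U ∩ Vᗮ`, so the geodesic condition on
`C` follows from the one on `V` by splitting `U = V ⊕ (U ∩ Vᗮ)`.
-/

open scoped InnerProductSpace

/-- `IsCone n k C U a` : `C` is the `k`-dimensional cone in `ℝⁿ` generated by the affine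
plane `P = a + U`, where `U` is a `k`-dimensional linear subspace, `a ∈ U^⊥`, and `P`
meets the unit sphere in more than one point; `C = {x ≠ 0 : x/|x| ∈ P}`. -/
def IsCone (n k : ℕ) (C : Set (EuclideanSpace ℝ (Fin n)))
    (U : Submodule ℝ (EuclideanSpace ℝ (Fin n))) (a : EuclideanSpace ℝ (Fin n)) : Prop :=
  Module.finrank ℝ U = k ∧ a ∈ Uᗮ ∧
  (∃ x y : EuclideanSpace ℝ (Fin n), x ≠ y ∧ ‖x‖ = 1 ∧ ‖y‖ = 1 ∧ x - a ∈ U ∧ y - a ∈ U) ∧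
  C = {x | x ≠ 0 ∧ ‖x‖⁻¹ • x - a ∈ U}

/-- `C` is a `k`-dimensional cone of aperture `ψ` in `ℝⁿ`: `cos ψ = |a|`, `ψ ∈ (0, π/2]`. -/
def IsConeWithAperture (n k : ℕ) (C : Set (EuclideanSpace ℝ (Fin n)))
    (U : Submodule ℝ (EuclideanSpace ℝ (Fin n))) (a : EuclideanSpace ℝ (Fin n))
    (ψ : ℝ) : Prop :=
  IsCone n k C U a ∧ ψ ∈ Set.Ioc 0 (Real.pi / 2) ∧ Real.cos ψ = ‖a‖

/-- A curve `r` (with second derivative `r''`) is a geodesic on the cone `C` generated by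
`a + U` : it lies on `C` and its acceleration is orthogonal to the tangent space
`span{r(t)} ⊕ (U ∩ r(t)^⊥)` of `C` at `r(t)`, for every `t ∈ I`. -/
def IsGeodesicOn (n : ℕ) (I : Set ℝ) (r r'' : ℝ → EuclideanSpace ℝ (Fin n))
    (C : Set (EuclideanSpace ℝ (Fin n)))
    (U : Submodule ℝ (EuclideanSpace ℝ (Fin n))) : Prop :=
  (∀ t ∈ I, r t ∈ C) ∧
  ∀ t ∈ I, ⟪r'' t, r t⟫_ℝ = 0 ∧
    ∀ w ∈ U, ⟪w, r t⟫_ℝ = 0 → ⟪r'' t, w⟫_ℝ = 0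

open Set Filter Topology

theorem one_sub_norm_sq_pos {F : Type*} [SeminormedAddGroup F] {a : F} (ha : ‖a‖ < 1) :
    0 < 1 - ‖a‖ ^ 2 :=
  sub_pos.2 (pow_lt_one₀ (norm_nonneg a) ha two_ne_zero)

section NormedSpace

variable {F : Type*} [NormedAddCommGroup F] [NormedSpace ℝ F]

theorem HasDerivAt.mem_of_eventually_mem {K : Submodule ℝ F} (hK : IsClosed (K : Set F))
    {f : ℝ → F} {f' : F} {t : ℝ} (hf : HasDerivAt f f' t) (h : ∀ᶠ s in 𝓝 t, f s ∈ K) : f' ∈ K :=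
  hK.mem_of_tendsto (hasDerivAt_iff_tendsto_slope.1 hf) <|
    (h.filter_mono nhdsWithin_le_nhds).mono fun _ hs => K.smul_mem _ (K.sub_mem hs h.self_of_nhds)

theorem eqOn_zero_of_hasDerivAt_of_hasDerivAt_smul {I : Set ℝ} (hI : I.OrdConnected)
    {f f' : ℝ → F} {d : ℝ → ℝ} (hf : ∀ t ∈ I, HasDerivAt f (f' t) t)
    (hf' : ∀ t ∈ I, HasDerivAt f' (d t • f t) t) (hd : ContinuousOn d I)
    {t₀ : ℝ} (ht₀ : t₀ ∈ I) (h₀ : f t₀ = 0) (h₀' : f' t₀ = 0) : EqOn f 0 I := by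
  intro t ht
  have hJ : uIcc t₀ t ⊆ I := hI.uIcc_subset ht₀ ht
  obtain ⟨M, hM⟩ := (isCompact_uIcc.image_of_continuousOn (hd.mono hJ).nnnorm).bddAbove
  set v : ℝ → F × F → F × F := fun s p => (p.2, d s • p.1)
  have hv : ∀ s ∈ uIcc t₀ t, LipschitzOnWith (max 1 M) (v s) univ := fun s hs =>
    (LipschitzWith.prod_snd.prodMk ((lipschitzWith_smul (d s)).comp LipschitzWith.prod_fst)
      |>.weaken (max_le_max le_rfl (by simpa using hM ⟨s, hs, rfl⟩))).lipschitzOnWith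
  set g : ℝ → F × F := fun s => (f s, f' s)
  have hg : ∀ s ∈ uIcc t₀ t, HasDerivAt g (v s (g s)) s := fun s hs =>
    (hf s (hJ hs)).prodMk (hf' s (hJ hs))
  have h0 : ∀ s, HasDerivAt (fun _ => 0 : ℝ → F × F) (v s 0) s := fun s => by
    rw [show v s 0 = 0 by simp [v]]
    exact hasDerivAt_const s 0
  have hg₀ : g t₀ = 0 := by simp [g, h₀, h₀']
  suffices g t = 0 from congrArg Prod.fst this
  rcases le_total t₀ t with h | h
  · rw [uIcc_of_le h] at hv hg
    exact ODE_solution_unique_of_mem_Icc_right (fun s hs => hv s (Ico_subset_Icc_self hs))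
      (HasDerivAt.continuousOn hg) (fun s hs => (hg s (Ico_subset_Icc_self hs)).hasDerivWithinAt)
      (fun _ _ => mem_univ _) continuousOn_const (fun s _ => (h0 s).hasDerivWithinAt)
      (fun _ _ => mem_univ _) hg₀ (right_mem_Icc.2 h)
  · rw [uIcc_of_ge h] at hv hg
    exact ODE_solution_unique_of_mem_Icc_left (fun s hs => hv s (Ioc_subset_Icc_self hs))
      (HasDerivAt.continuousOn hg) (fun s hs => (hg s (Ioc_subset_Icc_self hs)).hasDerivWithinAt)
      (fun _ _ => mem_univ _) continuousOn_const (fun s _ => (h0 s).hasDerivWithinAt)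
      (fun _ _ => mem_univ _) hg₀ (left_mem_Icc.2 h)

end NormedSpace

section InnerProductSpace

variable {E : Type*} [NormedAddCommGroup E] [InnerProductSpace ℝ E] {U V : Submodule ℝ E}
  {a b u v w x y : E}

theorem HasDerivAt.norm {f : ℝ → E} {f' : E} {t : ℝ} (hf : HasDerivAt f f' t) (h0 : f t ≠ 0) :
    HasDerivAt (fun s => ‖f s‖) (⟪f t, f'⟫_ℝ / ‖f t‖) t := by
  have hpos : 0 < ‖f t‖ := norm_pos_iff.2 h0
  convert hf.norm_sq.sqrt (by positivity) using 1
  · simp [Real.sqrt_sq (norm_nonneg _)]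
  · rw [Real.sqrt_sq hpos.le]; field_simp

theorem HasDerivAt.inner_const {f : ℝ → E} {f' : E} {t : ℝ} (hf : HasDerivAt f f' t) (y : E) :
    HasDerivAt (fun s => ⟪f s, y⟫_ℝ) ⟪f', y⟫_ℝ t := by
  simpa using hf.inner ℝ (hasDerivAt_const t y)

theorem inner_sub_smul_of_mem_orthogonal (ha : a ∈ Uᗮ) (hy : y ∈ U) (x : E) (c : ℝ) :
    ⟪x - c • a, y⟫_ℝ = ⟪x, y⟫_ℝ := by
  rw [inner_sub_left, real_inner_smul_left, U.inner_left_of_mem_orthogonal hy ha, mul_zero,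
    sub_zero]

theorem sub_norm_smul_ne_zero (hx : x ≠ 0) (ha : ‖a‖ < 1) : x - ‖x‖ • a ≠ 0 := by
  intro h
  have h' : ‖x‖ = ‖x‖ * ‖a‖ := by
    conv_lhs => rw [sub_eq_zero.1 h, norm_smul, Real.norm_of_nonneg (norm_nonneg x)]
  nlinarith [norm_pos_iff.2 hx]

theorem norm_add_eq_one_of_mem_orthogonal (ha : a ∈ Uᗮ) (hv : v ∈ U)
    (h : ‖v‖ ^ 2 = 1 - ‖a‖ ^ 2) : ‖a + v‖ = 1 := by
  have h2 : ‖a + v‖ ^ 2 = 1 := by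
    rw [norm_add_sq_real, U.inner_left_of_mem_orthogonal hv ha, h]
    ring
  exact (pow_eq_one_iff_of_nonneg (norm_nonneg _) two_ne_zero).1 h2

theorem inner_eq_div_mul_inner_of_forall_inner_eq_zero (hu : u ∈ U)
    (h : ∀ w ∈ U, ⟪w, u⟫_ℝ = 0 → ⟪y, w⟫_ℝ = 0) (hw : w ∈ U) :
    ⟪y, w⟫_ℝ = ⟪y, u⟫_ℝ / ‖u‖ ^ 2 * ⟪u, w⟫_ℝ := by
  rcases eq_or_ne u 0 with rfl | hu0
  · simpa using h w hw (inner_zero_right _)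
  set κ := ⟪u, w⟫_ℝ / ‖u‖ ^ 2
  have hκ : ⟪w - κ • u, u⟫_ℝ = 0 := by
    rw [inner_sub_left, real_inner_smul_left, real_inner_self_eq_norm_sq, real_inner_comm,
      div_mul_cancel₀ _ (by positivity), sub_self]
  have h0 := h _ (U.sub_mem hw (U.smul_mem κ hu)) hκ
  rw [inner_sub_right, real_inner_smul_right, sub_eq_zero] at h0
  rw [h0]
  ring

theorem Submodule.exists_mem_ne_zero_norm_sq_eq (hV : V ≠ ⊥) {c : ℝ} (hc : 0 < c) :
    ∃ v ∈ V, v ≠ 0 ∧ ‖v‖ ^ 2 = c := by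
  have : Nontrivial V := Submodule.nontrivial_iff_ne_bot.2 hV
  obtain ⟨v, hv⟩ := exists_norm_eq V (Real.sqrt_nonneg c)
  have hv2 : ‖(v : E)‖ ^ 2 = c := by
    show ‖v‖ ^ 2 = c
    rw [hv, Real.sq_sqrt hc.le]
  refine ⟨v, v.2, fun h => ?_, hv2⟩
  rw [h, norm_zero] at hv2
  exact hc.ne (by simpa using hv2)

theorem mem_of_le_of_forall_inner_eq_zero [V.HasOrthogonalProjection] (hVU : V ≤ U)
    (hx : x ∈ U) (h : ∀ y ∈ U, y ∈ Vᗮ → ⟪x, y⟫_ℝ = 0) : x ∈ V := by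
  set y := x - V.starProjection x
  have hyV : y ∈ Vᗮ := V.sub_starProjection_mem_orthogonal x
  have hy : ⟪y, y⟫_ℝ = 0 := by
    rw [inner_sub_left, h y (U.sub_mem hx (hVU (V.starProjection_apply_mem x))) hyV,
      V.inner_right_of_mem_orthogonal (V.starProjection_apply_mem x) hyV, sub_zero]
  exact V.starProjection_eq_self_iff.1 (sub_eq_zero.1 (inner_self_eq_zero.1 hy)).symm

theorem inner_eq_zero_of_le_of_mem_sup [V.HasOrthogonalProjection] (hVU : V ≤ U)
    (haU : a ∈ Uᗮ) (hx : x ∈ (ℝ ∙ a) ⊔ V) (hy : y ∈ (ℝ ∙ a) ⊔ V)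
    (hyV : ∀ w ∈ V, ⟪w, x⟫_ℝ = 0 → ⟪y, w⟫_ℝ = 0) (hw : w ∈ U) (hwx : ⟪w, x⟫_ℝ = 0) :
    ⟪y, w⟫_ℝ = 0 := by
  set p := V.starProjection w
  have hp : p ∈ V := V.starProjection_apply_mem w
  have hq : w - p ∈ ((ℝ ∙ a) ⊔ V)ᗮ := by
    rw [← Submodule.inf_orthogonal]
    refine Submodule.mem_inf.2 ⟨?_, V.sub_starProjection_mem_orthogonal w⟩
    rw [Submodule.mem_orthogonal_singleton_iff_inner_right]
    exact U.inner_left_of_mem_orthogonal (U.sub_mem hw (hVU hp)) haU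
  have hpx : ⟪p, x⟫_ℝ = 0 := by
    have h := Submodule.inner_left_of_mem_orthogonal hx hq
    rwa [inner_sub_left, hwx, zero_sub, neg_eq_zero] at h
  calc ⟪y, w⟫_ℝ = ⟪y, p⟫_ℝ + ⟪y, w - p⟫_ℝ := by rw [← inner_add_right, add_sub_cancel]
    _ = 0 := by rw [hyV p hp hpx, Submodule.inner_right_of_mem_orthogonal hy hq, add_zero]

def planeCone (a : E) (U : Submodule ℝ E) : Set E := {x | x ≠ 0 ∧ ‖x‖⁻¹ • x - a ∈ U}

theorem mem_planeCone_iff : x ∈ planeCone a U ↔ x ≠ 0 ∧ x - ‖x‖ • a ∈ U := by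
  refine and_congr_right fun hx => ?_
  rw [← U.smul_mem_iff (norm_ne_zero_iff.2 hx), smul_sub, smul_inv_smul₀ (norm_ne_zero_iff.2 hx)]

theorem planeCone_mono (h : V ≤ U) : planeCone a V ⊆ planeCone a U :=
  fun _ hx => ⟨hx.1, h hx.2⟩

theorem add_mem_planeCone (ha : a ∈ Uᗮ) (hv : v ∈ U) (h : ‖v‖ ^ 2 = 1 - ‖a‖ ^ 2) :
    a + v ∈ planeCone a U := by
  have h1 := norm_add_eq_one_of_mem_orthogonal ha hv h
  refine mem_planeCone_iff.2 ⟨fun h0 => by simp [h0] at h1, ?_⟩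
  rwa [h1, one_smul, add_sub_cancel_left]

theorem mem_sup_of_mem_planeCone (hx : x ∈ planeCone a U) : x ∈ (ℝ ∙ a) ⊔ U := by
  rw [← add_sub_cancel (‖x‖ • a) x]
  exact Submodule.add_mem_sup (Submodule.smul_mem _ _ (Submodule.mem_span_singleton_self a))
    (mem_planeCone_iff.1 hx).2

theorem linearIndependent_of_mem_planeCone (hx : x ∈ planeCone a U) (haU : a ∈ Uᗮ)
    (ha : ‖a‖ < 1) (hv : ∀ c : ℝ, v ≠ c • x) :
    LinearIndependent ℝ ![x - ‖x‖ • a, v - (⟪x, v⟫_ℝ / ‖x‖) • a] := by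
  obtain ⟨hx0, hxU⟩ := mem_planeCone_iff.1 hx
  have hρ : 0 < ‖x‖ := norm_pos_iff.2 hx0
  rw [LinearIndependent.pair_iff' (sub_norm_smul_ne_zero hx0 ha)]
  intro k hk
  apply hv k
  set μ := ⟪x, v⟫_ℝ / ‖x‖ - k * ‖x‖
  have hvk : v - k • x = μ • a := by linear_combination (norm := module) -hk
  have hxa : ⟪x, a⟫_ℝ = ‖x‖ * ‖a‖ ^ 2 := by
    have := U.inner_right_of_mem_orthogonal hxU haU
    rw [inner_sub_left, real_inner_smul_left, real_inner_self_eq_norm_sq] at this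
    linarith
  have hμ : μ * ‖x‖ * (1 - ‖a‖ ^ 2) = 0 := by
    have h := congrArg (⟪x, ·⟫_ℝ) hvk
    simp only [inner_sub_right, real_inner_smul_right, real_inner_self_eq_norm_sq, hxa] at h
    have hμx : μ * ‖x‖ = ⟪x, v⟫_ℝ - k * ‖x‖ ^ 2 := by
      simp only [μ]
      field_simp
    linear_combination h + hμx
  have hμ0 : μ = 0 := by simpa [hρ.ne', (one_sub_norm_sq_pos ha).ne'] using hμ
  rw [← sub_eq_zero, hvk, hμ0, zero_smul]

theorem eq_and_le_of_planeCone_subset (hV : V ≠ ⊥) (hbV : b ∈ Vᗮ) (haU : a ∈ Uᗮ)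
    (hab : ‖b‖ = ‖a‖) (ha : ‖a‖ < 1) (hsub : planeCone b V ⊆ planeCone a U) :
    b = a ∧ V ≤ U := by
  have hsphere : ∀ v ∈ V, ‖v‖ ^ 2 = 1 - ‖a‖ ^ 2 → b + v - a ∈ U := fun v hv hvn => by
    have h1 := norm_add_eq_one_of_mem_orthogonal hbV hv (hab ▸ hvn)
    simpa [h1] using (mem_planeCone_iff.1 (hsub (add_mem_planeCone hbV hv (hab ▸ hvn)))).2
  have hpair : ∀ v ∈ V, ‖v‖ ^ 2 = 1 - ‖a‖ ^ 2 → v ∈ U ∧ b - a ∈ U := fun v hv hvn => by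
    have hplus := hsphere v hv hvn
    have hminus := hsphere (-v) (V.neg_mem hv) (by rwa [norm_neg])
    constructor
    · convert U.smul_mem (1 / 2 : ℝ) (U.sub_mem hplus hminus) using 1; module
    · convert U.smul_mem (1 / 2 : ℝ) (U.add_mem hplus hminus) using 1; module
  obtain ⟨v₀, hv₀, hv₀0, hv₀n⟩ := V.exists_mem_ne_zero_norm_sq_eq hV (one_sub_norm_sq_pos ha)
  have hba : b = a := by
    have h := norm_add_sq_real a (b - a)
    rw [U.inner_left_of_mem_orthogonal (hpair v₀ hv₀ hv₀n).2 haU, add_sub_cancel, hab] at h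
    exact sub_eq_zero.1 (norm_eq_zero.1 (pow_eq_zero_iff two_ne_zero |>.1 (by linarith)))
  refine ⟨hba, fun v hv => ?_⟩
  rcases eq_or_ne v 0 with rfl | hv0
  · exact U.zero_mem
  have hc : ‖v₀‖ / ‖v‖ ≠ 0 := div_ne_zero (norm_ne_zero_iff.2 hv₀0) (norm_ne_zero_iff.2 hv0)
  refine (U.smul_mem_iff hc).1 (hpair _ (V.smul_mem _ hv) ?_).1
  rw [norm_smul, Real.norm_of_nonneg (by positivity), div_mul_cancel₀ _ (norm_ne_zero_iff.2 hv0),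
    hv₀n]

end InnerProductSpace

section Geodesic

variable {m : ℕ} {I : Set ℝ} {r r' r'' : ℝ → EuclideanSpace ℝ (Fin m)}
  {U V : Submodule ℝ (EuclideanSpace ℝ (Fin m))} {a : EuclideanSpace ℝ (Fin m)}

theorem isCone_planeCone {k : ℕ} (hU : Module.finrank ℝ U = k) (hk : 0 < k) (haU : a ∈ Uᗮ)
    (ha : ‖a‖ < 1) : IsCone m k (planeCone a U) U a := by
  have hU0 : U ≠ ⊥ := fun h => hk.ne' (hU.symm.trans (Submodule.finrank_eq_zero.2 h))
  obtain ⟨v, hv, hv0, hvn⟩ := U.exists_mem_ne_zero_norm_sq_eq hU0 (one_sub_norm_sq_pos ha)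
  refine ⟨hU, haU, ⟨a + v, a + -v, fun h => hv0 ?_, norm_add_eq_one_of_mem_orthogonal haU hv hvn,
    norm_add_eq_one_of_mem_orthogonal haU (U.neg_mem hv) (by rwa [norm_neg]), by simpa using hv,
    by simpa using U.neg_mem hv⟩, rfl⟩
  simpa [eq_neg_iff_add_eq_zero, ← two_smul ℝ] using h

theorem IsGeodesicOn.inner_accel_eq (haU : a ∈ Uᗮ)
    (hgeo : IsGeodesicOn m I r r'' (planeCone a U) U) {t : ℝ} (ht : t ∈ I) {w} (hw : w ∈ U) :
    ⟪r'' t, w⟫_ℝ = ⟪r'' t, r t - ‖r t‖ • a⟫_ℝ / ‖r t - ‖r t‖ • a‖ ^ 2 * ⟪r t, w⟫_ℝ := by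
  rw [← inner_sub_smul_of_mem_orthogonal haU hw (r t) ‖r t‖]
  refine inner_eq_div_mul_inner_of_forall_inner_eq_zero (mem_planeCone_iff.1 (hgeo.1 t ht)).2
    (fun w' hw' h => (hgeo.2 t ht).2 w' hw' ?_) hw
  rwa [real_inner_comm, ← inner_sub_smul_of_mem_orthogonal haU hw', real_inner_comm]

theorem IsGeodesicOn.exists_two_dim (hIopen : IsOpen I) (hIconn : I.OrdConnected)
    (hd1 : ∀ t ∈ I, HasDerivAt r (r' t) t) (hd2 : ∀ t ∈ I, HasDerivAt r' (r'' t) t)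
    (hC2 : ContinuousOn r'' I) {t₀ : ℝ} (ht₀ : t₀ ∈ I) (hnc : ∀ c : ℝ, r' t₀ ≠ c • r t₀)
    (haU : a ∈ Uᗮ) (ha : ‖a‖ < 1) (hgeo : IsGeodesicOn m I r r'' (planeCone a U) U) :
    ∃ V ≤ U, Module.finrank ℝ V = 2 ∧ IsGeodesicOn m I r r'' (planeCone a V) V := by
  set u := fun t => r t - ‖r t‖ • a
  have hr0 : ∀ t ∈ I, r t ≠ 0 := fun t ht => (hgeo.1 t ht).1
  have huU : ∀ t ∈ I, u t ∈ U := fun t ht => (mem_planeCone_iff.1 (hgeo.1 t ht)).2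
  set u' := r' t₀ - (⟪r t₀, r' t₀⟫_ℝ / ‖r t₀‖) • a
  have hu'U : u' ∈ U :=
    ((hd1 t₀ ht₀).sub (((hd1 t₀ ht₀).norm (hr0 t₀ ht₀)).smul_const a)).mem_of_eventually_mem
      U.closed_of_finiteDimensional (eventually_of_mem (hIopen.mem_nhds ht₀) huU)
  set V := Submodule.span ℝ {u t₀, u'}
  have hVU : V ≤ U :=
    Submodule.span_le.2 (insert_subset (huU t₀ ht₀) (singleton_subset_iff.2 hu'U))
  refine ⟨V, hVU, ?_, ?_⟩
  · have := finrank_span_eq_card (linearIndependent_of_mem_planeCone (hgeo.1 t₀ ht₀) haU ha hnc)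
    rwa [Matrix.range_cons_cons_empty, Fintype.card_fin] at this
  set d := fun t => ⟪r'' t, u t⟫_ℝ / ‖u t‖ ^ 2
  have hu : ContinuousOn u I :=
    (HasDerivAt.continuousOn hd1).sub ((HasDerivAt.continuousOn hd1).norm.smul continuousOn_const)
  have hd : ContinuousOn d I := (hC2.inner hu).div (hu.norm.pow 2) fun t ht =>
    pow_ne_zero 2 (norm_ne_zero_iff.2 (sub_norm_smul_ne_zero (hr0 t ht) ha))
  have hflat : ∀ y ∈ U, y ∈ Vᗮ → ∀ t ∈ I, ⟪r t, y⟫_ℝ = 0 := by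
    intro y hyU hyV
    have hpos : ⟪r t₀, y⟫_ℝ = 0 := (inner_sub_smul_of_mem_orthogonal haU hyU _ _).symm.trans
      (V.inner_right_of_mem_orthogonal (Submodule.subset_span (mem_insert _ _)) hyV)
    have hvel : ⟪r' t₀, y⟫_ℝ = 0 := (inner_sub_smul_of_mem_orthogonal haU hyU _ _).symm.trans
      (V.inner_right_of_mem_orthogonal (Submodule.subset_span (mem_insert_of_mem _ rfl)) hyV)
    refine eqOn_zero_of_hasDerivAt_of_hasDerivAt_smul hIconn
      (fun t ht => (hd1 t ht).inner_const y) (fun t ht => ?_) hd ht₀ hpos hvel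
    have h := (hd2 t ht).inner_const y
    rwa [hgeo.inner_accel_eq haU ht hyU] at h
  have huV : ∀ t ∈ I, u t ∈ V := fun t ht => mem_of_le_of_forall_inner_eq_zero hVU (huU t ht)
    fun y hyU hyV => by rw [inner_sub_smul_of_mem_orthogonal haU hyU]; exact hflat y hyU hyV t ht
  exact ⟨fun t ht => mem_planeCone_iff.2 ⟨hr0 t ht, huV t ht⟩,
    fun t ht => ⟨(hgeo.2 t ht).1, fun w hw => (hgeo.2 t ht).2 w (hVU hw)⟩⟩

theorem IsGeodesicOn.mono_planeCone (hIopen : IsOpen I) (hd1 : ∀ t ∈ I, HasDerivAt r (r' t) t)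
    (hd2 : ∀ t ∈ I, HasDerivAt r' (r'' t) t) (hVU : V ≤ U) (haU : a ∈ Uᗮ)
    (hgeo : IsGeodesicOn m I r r'' (planeCone a V) V) :
    IsGeodesicOn m I r r'' (planeCone a U) U := by
  have hW : IsClosed (((ℝ ∙ a) ⊔ V : Submodule ℝ _) : Set (EuclideanSpace ℝ (Fin m))) :=
    Submodule.closed_of_finiteDimensional _
  have hr : ∀ t ∈ I, r t ∈ (ℝ ∙ a) ⊔ V := fun t ht => mem_sup_of_mem_planeCone (hgeo.1 t ht)
  have hr' : ∀ t ∈ I, r' t ∈ (ℝ ∙ a) ⊔ V := fun t ht =>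
    (hd1 t ht).mem_of_eventually_mem hW (eventually_of_mem (hIopen.mem_nhds ht) hr)
  have hr'' : ∀ t ∈ I, r'' t ∈ (ℝ ∙ a) ⊔ V := fun t ht =>
    (hd2 t ht).mem_of_eventually_mem hW (eventually_of_mem (hIopen.mem_nhds ht) hr')
  exact ⟨fun t ht => planeCone_mono hVU (hgeo.1 t ht), fun t ht => ⟨(hgeo.2 t ht).1,
    fun w hw hwr =>
      inner_eq_zero_of_le_of_mem_sup hVU haU (hr t ht) (hr'' t ht) (hgeo.2 t ht).2 hw hwr⟩⟩

end Geodesic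

theorem geodesic_on_cone_iff_two_dim_general
    (n : ℕ)
    (I : Set ℝ) (hIopen : IsOpen I) (hIconn : I.OrdConnected)
    (r r' r'' : ℝ → EuclideanSpace ℝ (Fin (n + 1)))
    (hd1 : ∀ t ∈ I, HasDerivAt r (r' t) t)
    (hd2 : ∀ t ∈ I, HasDerivAt r' (r'' t) t)
    (hC2 : ContinuousOn r'' I)
    (hnoncoll : ¬ (∀ t ∈ I, ∃ c : ℝ, r' t = c • r t))
    (C : Set (EuclideanSpace ℝ (Fin (n + 1))))
    (U : Submodule ℝ (EuclideanSpace ℝ (Fin (n + 1))))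
    (a : EuclideanSpace ℝ (Fin (n + 1))) (ψ : ℝ)
    (hC : IsConeWithAperture (n + 1) n C U a ψ) :
    IsGeodesicOn (n + 1) I r r'' C U ↔
      ∃ (D : Set (EuclideanSpace ℝ (Fin (n + 1))))
        (V : Submodule ℝ (EuclideanSpace ℝ (Fin (n + 1))))
        (b : EuclideanSpace ℝ (Fin (n + 1))),
        IsConeWithAperture (n + 1) 2 D V b ψ ∧ D ⊆ C ∧
        IsGeodesicOn (n + 1) I r r'' D V := by
  obtain ⟨⟨-, haU, -, rfl⟩, hψ, hcos⟩ := hC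
  have ha : ‖a‖ < 1 := by
    rw [← hcos, ← Real.cos_zero]
    exact Real.cos_lt_cos_of_nonneg_of_le_pi le_rfl (hψ.2.trans (by linarith [Real.pi_pos])) hψ.1
  constructor
  · intro hgeo
    push Not at hnoncoll
    obtain ⟨t₀, ht₀, hnc⟩ := hnoncoll
    obtain ⟨V, hVU, hV2, hgeoV⟩ := hgeo.exists_two_dim hIopen hIconn hd1 hd2 hC2 ht₀ hnc haU ha
    exact ⟨planeCone a V, V, a,
      ⟨isCone_planeCone hV2 two_pos (Submodule.orthogonal_le hVU haU) ha, hψ, hcos⟩,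
      planeCone_mono hVU, hgeoV⟩
  · rintro ⟨D, V, b, ⟨⟨hV2, hbV, -, rfl⟩, -, hcosb⟩, hDC, hgeoD⟩
    have hV : V ≠ ⊥ := fun h => two_ne_zero (hV2.symm.trans (Submodule.finrank_eq_zero.2 h))
    obtain ⟨rfl, hVU⟩ := eq_and_le_of_planeCone_subset hV hbV haU (hcosb.symm.trans hcos) ha hDC
    exact hgeoD.mono_planeCone hIopen hd1 hd2 hVU haU

/-- Let `n ≥ 2`, let `C` be an `n`-dimensional cone of aperture `ψ` in
`ℝ^{n+1}`, and let `r : I → ℝ^{n+1} ∖ {0}` be a non-colliding twice continuously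
differentiable curve on an open interval `I`. Then `r` is a geodesic on `C` if and only
if there is a `2`-dimensional cone `D ⊆ C` of aperture `ψ` on which `r` is a geodesic. -/
theorem geodesic_on_cone_iff_two_dim
    (n : ℕ) (hn : 2 ≤ n)
    (I : Set ℝ) (hIopen : IsOpen I) (hIconn : I.OrdConnected)
    (r r' r'' : ℝ → EuclideanSpace ℝ (Fin (n + 1)))
    (hne : ∀ t ∈ I, r t ≠ 0)
    (hd1 : ∀ t ∈ I, HasDerivAt r (r' t) t)
    (hd2 : ∀ t ∈ I, HasDerivAt r' (r'' t) t)
    (hC2 : ContinuousOn r'' I)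
    (hnoncoll : ¬ (∀ t ∈ I, ∃ c : ℝ, r' t = c • r t))
    (C : Set (EuclideanSpace ℝ (Fin (n + 1))))
    (U : Submodule ℝ (EuclideanSpace ℝ (Fin (n + 1))))
    (a : EuclideanSpace ℝ (Fin (n + 1))) (ψ : ℝ)
    (hC : IsConeWithAperture (n + 1) n C U a ψ) :
    IsGeodesicOn (n + 1) I r r'' C U ↔
      ∃ (D : Set (EuclideanSpace ℝ (Fin (n + 1))))
        (V : Submodule ℝ (EuclideanSpace ℝ (Fin (n + 1))))
        (b : EuclideanSpace ℝ (Fin (n + 1))),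
        IsConeWithAperture (n + 1) 2 D V b ψ ∧ D ⊆ C ∧
        IsGeodesicOn (n + 1) I r r'' D V :=
  geodesic_on_cone_iff_two_dim_general n I hIopen hIconn r r' r'' hd1 hd2 hC2 hnoncoll C U a ψ hC
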